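/- arXiv:2505.04266 — 2 statements merged into one kernel-verified Lean document; each statement's English description precedes it below -/
import Mathlib

section
/- Consider a dynamic Bayesian network over genes {1,…,N} and times {1,…,K} with static acyclic directed graph G_stat, where the joint law factorizes as P(X = x) = Π_{k=1}^{K-1} Π_{i=1}^N P(X_{i,k+1} = x_{i,k+1} | (X_{ℓ,k})_{ℓ∈A(i)} = (x_{ℓ,k})_{ℓ∈A(i)}) · Π_i P(X_{i,1} = x_{i,1}), with A(i) the parents of i. Let C be a connected component of G_stat minus vertex 1 that is downstream of gene 1 (no edge from any j ∈ C to 1). Then under the conditional knock-out model (the law of (X_{ik})_{2≤i≤N} conditioned on (X_{1k})_{1≤k≤K} = 0), the family (X_{ik})_{i∈C, 1≤k≤K} is independent of (X_{ik})_{i∉C∪{1}, 1≤k≤K}. -/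
/-!
Under the knock-out, a configuration with gene `g1` frozen at `0` is determined by its
restriction `a` to `C` and its restriction `b` to the genes outside `C ∪ {g1}`. In the
factorization of the law, a factor of a gene of `C` only sees genes of `C ∪ {g1}`, hence depends
on `a` alone; a factor of a gene outside `C` (including `g1`, as `C` is downstream of it) only
sees genes outside `C`, hence depends on `b` alone. So the joint mass of `(a, b)` on the
knock-out event has product form, which for finitely-valued variables is independence.
-/

open MeasureTheory ProbabilityTheory
open scoped ENNReal ProbabilityTheory

section ProductMass

variable {Ω β β' : Type*} [MeasurableSpace Ω] {μ : Measure Ω}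
  [Fintype β] [MeasurableSpace β] [MeasurableSingletonClass β]
  [Fintype β'] [MeasurableSpace β'] [MeasurableSingletonClass β']
  {f : Ω → β} {g : Ω → β'}

lemma indepFun_of_measure_preimage_singleton_eq_mul [IsProbabilityMeasure μ]
    (hf : Measurable f) (hg : Measurable g) (u : β → ℝ≥0∞) (v : β' → ℝ≥0∞)
    (h : ∀ a b, μ (f ⁻¹' {a} ∩ g ⁻¹' {b}) = u a * v b) :
    f ⟂ᵢ[μ] g := by
  have marginal_left (a : β) : μ (f ⁻¹' {a}) = u a * ∑ b, v b := by
    calc μ (f ⁻¹' {a}) = μ.restrict (f ⁻¹' {a}) (g ⁻¹' ↑(Finset.univ : Finset β')) := by simp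
      _ = ∑ b, μ.restrict (f ⁻¹' {a}) (g ⁻¹' {b}) :=
        (sum_measure_preimage_singleton _ fun b _ => hg (measurableSet_singleton b)).symm
      _ = u a * ∑ b, v b := by
        simp only [Measure.restrict_apply (hg (measurableSet_singleton _)), Set.inter_comm, h,
          Finset.mul_sum]
  have marginal_right (b : β') : μ (g ⁻¹' {b}) = (∑ a, u a) * v b := by
    calc μ (g ⁻¹' {b}) = μ.restrict (g ⁻¹' {b}) (f ⁻¹' ↑(Finset.univ : Finset β)) := by simp
      _ = ∑ a, μ.restrict (g ⁻¹' {b}) (f ⁻¹' {a}) :=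
        (sum_measure_preimage_singleton _ fun a _ => hf (measurableSet_singleton a)).symm
      _ = (∑ a, u a) * v b := by
        simp only [Measure.restrict_apply (hf (measurableSet_singleton _)), h, Finset.sum_mul]
  have total : (∑ a, u a) * ∑ b, v b = 1 := by
    rw [← measure_univ (μ := μ), ← Set.preimage_univ (f := f), ← Finset.coe_univ,
      ← sum_measure_preimage_singleton _ fun a _ => hf (measurableSet_singleton a),
      Finset.sum_mul]
    simp only [marginal_left]
  rw [indepFun_iff_map_prod_eq_prod_map_map hf.aemeasurable hg.aemeasurable]
  refine Measure.ext_of_singleton fun ⟨a, b⟩ => ?_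
  rw [← Set.singleton_prod_singleton, Measure.prod_prod,
    Measure.map_apply (hf.prodMk hg)
      ((measurableSet_singleton a).prod (measurableSet_singleton b)),
    Measure.map_apply hf (measurableSet_singleton a),
    Measure.map_apply hg (measurableSet_singleton b), Set.mk_preimage_prod, h,
    marginal_left, marginal_right]
  calc u a * v b = u a * v b * ((∑ a, u a) * ∑ b, v b) := by rw [total, mul_one]
    _ = (u a * ∑ b, v b) * ((∑ a, u a) * v b) := by ring

lemma indepFun_cond_of_measure_inter_preimage_singleton_eq_mul [IsFiniteMeasure μ]
    (hf : Measurable f) (hg : Measurable g) {E : Set Ω} (hE : MeasurableSet E) (hμE : μ E ≠ 0)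
    (F : β → ℝ≥0∞) (G : β' → ℝ≥0∞) (h : ∀ a b, μ (E ∩ f ⁻¹' {a} ∩ g ⁻¹' {b}) = F a * G b) :
    f ⟂ᵢ[μ[|E]] g := by
  have := cond_isProbabilityMeasure (μ := μ) hμE
  refine indepFun_of_measure_preimage_singleton_eq_mul hf hg (fun a => (μ E)⁻¹ * F a) G
    fun a b => ?_
  rw [cond_apply hE, ← Set.inter_assoc, h, mul_assoc]

end ProductMass

section KnockOut

variable {ι τ : Type*} [DecidableEq ι] [Zero τ] (C : Finset ι) (g1 : ι)

def knockOutConfig (a : C → τ) (b : {i : ι // i ∉ C ∧ i ≠ g1} → τ) : ι → τ :=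
  fun i => if h : i ∈ C then a ⟨i, h⟩ else if h' : i = g1 then 0 else b ⟨i, h, h'⟩

variable {C g1}

lemma knockOutConfig_of_mem (a : C → τ) (b : {i : ι // i ∉ C ∧ i ≠ g1} → τ) {i : ι}
    (hi : i ∈ C) : knockOutConfig C g1 a b i = a ⟨i, hi⟩ :=
  dif_pos hi

lemma knockOutConfig_of_notMem (a : C → τ) (b : {i : ι // i ∉ C ∧ i ≠ g1} → τ) {i : ι}
    (hi : i ∉ C) (hig : i ≠ g1) : knockOutConfig C g1 a b i = b ⟨i, hi, hig⟩ := by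
  simp [knockOutConfig, hi, hig]

lemma knockOutConfig_self (hg1C : g1 ∉ C) (a : C → τ) (b : {i : ι // i ∉ C ∧ i ≠ g1} → τ) :
    knockOutConfig C g1 a b g1 = 0 := by
  simp [knockOutConfig, hg1C]

lemma knockOutConfig_congr_left (a a' : C → τ) (b : {i : ι // i ∉ C ∧ i ≠ g1} → τ) {i : ι}
    (hi : i ∉ C) : knockOutConfig C g1 a b i = knockOutConfig C g1 a' b i := by
  simp [knockOutConfig, hi]

lemma knockOutConfig_congr_right (a : C → τ) (b b' : {i : ι // i ∉ C ∧ i ≠ g1} → τ) {i : ι}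
    (hi : i ∈ C ∨ i = g1) : knockOutConfig C g1 a b i = knockOutConfig C g1 a b' i := by
  rcases hi with hi | rfl
  · simp [knockOutConfig, hi]
  · simp [knockOutConfig]

lemma eq_knockOutConfig_iff (hg1C : g1 ∉ C) (x : ι → τ) (a : C → τ)
    (b : {i : ι // i ∉ C ∧ i ≠ g1} → τ) :
    x = knockOutConfig C g1 a b ↔
      x g1 = 0 ∧ (fun i : C => x i) = a ∧ (fun i : {i : ι // i ∉ C ∧ i ≠ g1} => x i) = b := by
  constructor
  · rintro rfl
    refine ⟨knockOutConfig_self hg1C a b, ?_, ?_⟩ <;> funext i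
    · exact knockOutConfig_of_mem a b i.2
    · exact knockOutConfig_of_notMem a b i.2.1 i.2.2
  · rintro ⟨hg1, rfl, rfl⟩
    funext i
    by_cases hi : i ∈ C
    · rw [knockOutConfig_of_mem _ _ hi]
    by_cases hig : i = g1
    · rw [hig, hg1, knockOutConfig_self hg1C]
    · rw [knockOutConfig_of_notMem _ _ hi hig]

end KnockOut

section DynamicBayesianNetwork

variable {ι σ : Type*} {K : ℕ} [NeZero K]
  {p0 : ι → σ → ℝ≥0∞} {p : ι → σ → (ι → σ) → ℝ≥0∞} {A : ι → Finset ι}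

variable (p0 p) in
def dbnFactor (i : ι) (k : Fin K) (x : ι → Fin K → σ) : ℝ≥0∞ :=
  if k = 0 then p0 i (x i 0) else p i (x i k) (fun ℓ => x ℓ (k - 1))

lemma prod_dbnFactor_congr (hlocal : ∀ i v y y', (∀ ℓ ∈ A i, y ℓ = y' ℓ) → p i v y = p i v y')
    (s : Finset ι) {x y : ι → Fin K → σ} (hxy : ∀ i ∈ s, x i = y i)
    (hparents : ∀ i ∈ s, ∀ j ∈ A i, x j = y j) :
    ∏ i ∈ s, ∏ k, dbnFactor p0 p i k x = ∏ i ∈ s, ∏ k, dbnFactor p0 p i k y := by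
  refine Finset.prod_congr rfl fun i hi => Finset.prod_congr rfl fun k _ => ?_
  unfold dbnFactor
  split_ifs
  · rw [hxy i hi]
  · rw [hxy i hi]
    exact hlocal i _ _ _ fun ℓ hℓ => by rw [hparents i hi ℓ hℓ]

variable [Fintype ι] [DecidableEq ι] [Zero σ] {C : Finset ι} {g1 : ι}

lemma prod_dbnFactor_knockOutConfig
    (hlocal : ∀ i v y y', (∀ ℓ ∈ A i, y ℓ = y' ℓ) → p i v y = p i v y')
    (hparents : ∀ i ∈ C, ∀ j ∈ A i, j ∈ C ∨ j = g1) (hout : ∀ i ∉ C, ∀ j ∈ A i, j ∉ C)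
    (a : C → Fin K → σ) (b : {i : ι // i ∉ C ∧ i ≠ g1} → Fin K → σ) :
    ∏ i, ∏ k, dbnFactor p0 p i k (knockOutConfig C g1 a b) =
      (∏ i ∈ C, ∏ k, dbnFactor p0 p i k (knockOutConfig C g1 a 0)) *
        ∏ i ∈ Cᶜ, ∏ k, dbnFactor p0 p i k (knockOutConfig C g1 0 b) := by
  rw [← Finset.prod_mul_prod_compl C]
  congr 1
  · exact prod_dbnFactor_congr hlocal C
      (fun i hi => knockOutConfig_congr_right a b 0 (Or.inl hi))
      (fun i hi j hj => knockOutConfig_congr_right a b 0 (hparents i hi j hj))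
  · exact prod_dbnFactor_congr hlocal Cᶜ
      (fun i hi => knockOutConfig_congr_left a 0 b (Finset.mem_compl.1 hi))
      (fun i hi j hj => knockOutConfig_congr_left a 0 b (hout i (Finset.mem_compl.1 hi) j hj))

end DynamicBayesianNetwork

/-- in a dynamic Bayesian network over genes `Fin N` and times `Fin K` with binary
expressions, whose law factorizes via time-homogeneous transition probabilities `p` depending
only on the parents `A i` at the previous time, if `C` is a connected component of the static
graph minus gene `g1` which is downstream of `g1` (no edge from `C` to `g1`), then under the
conditional knock-out model (conditioning on gene `g1` being `0` at all times), the expressions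
of genes in `C` are independent of the expressions of genes outside `C ∪ {g1}`. -/
theorem stmt_8 {N K : ℕ} [NeZero K] {Ω : Type*} [MeasurableSpace Ω]
    (Pr : Measure Ω) [IsProbabilityMeasure Pr]
    (X : Ω → Fin N → Fin K → Fin 2) (hX : Measurable X)
    (A : Fin N → Finset (Fin N))
    (p0 : Fin N → Fin 2 → ℝ≥0∞) (p : Fin N → Fin 2 → (Fin N → Fin 2) → ℝ≥0∞)
    -- the transition probability of gene `i` depends only on its parents `A i`:
    (hlocal : ∀ i v y y', (∀ ℓ ∈ A i, y ℓ = y' ℓ) → p i v y = p i v y')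
    -- factorization of the law of the dynamic Bayesian network:
    (hfact : ∀ x : Fin N → Fin K → Fin 2,
      Pr {ω | X ω = x} =
        ∏ i : Fin N, ∏ k : Fin K,
          (if k = 0 then p0 i (x i 0) else p i (x i k) (fun ℓ => x ℓ (k - 1))))
    (g1 : Fin N) (C : Finset (Fin N)) (hg1C : g1 ∉ C)
    -- `C` is closed under parents in the graph minus `g1`:
    (hparents : ∀ i ∈ C, ∀ j ∈ A i, j ∈ C ∨ j = g1)
    -- `C` is closed under children in the graph minus `g1`:
    (hchildren : ∀ i : Fin N, i ∉ C → i ≠ g1 → ∀ j ∈ A i, j ∉ C)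
    -- `C` is downstream of gene `g1`: no edge from `C` to `g1`:
    (hdown : ∀ j ∈ A g1, j ∉ C)
    -- the knock-out event has positive probability:
    (hpos : Pr {ω | ∀ k, X ω g1 k = 0} ≠ 0) :
    IndepFun (fun ω (i : C) (k : Fin K) => X ω i k)
      (fun ω (i : {i : Fin N // i ∉ C ∧ i ≠ g1}) (k : Fin K) => X ω i k)
      (Pr[|{ω | ∀ k, X ω g1 k = 0}]) := by
  have hout : ∀ i ∉ C, ∀ j ∈ A i, j ∉ C := fun i hi =>
    if hig : i = g1 then hig ▸ hdown else hchildren i hi hig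
  refine indepFun_cond_of_measure_inter_preimage_singleton_eq_mul (by fun_prop) (by fun_prop)
    (hX (MeasurableSet.of_discrete (s := {x : Fin N → Fin K → Fin 2 | ∀ k, x g1 k = 0}))) hpos
    (fun a => ∏ i ∈ C, ∏ k, dbnFactor p0 p i k (knockOutConfig C g1 a 0))
    (fun b => ∏ i ∈ Cᶜ, ∏ k, dbnFactor p0 p i k (knockOutConfig C g1 0 b)) fun a b => ?_
  have hevent : {ω | ∀ k, X ω g1 k = 0} ∩ (fun ω (i : C) (k : Fin K) => X ω i k) ⁻¹' {a} ∩
      (fun ω (i : {i : Fin N // i ∉ C ∧ i ≠ g1}) (k : Fin K) => X ω i k) ⁻¹' {b} =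
      {ω | X ω = knockOutConfig C g1 a b} := by
    ext ω
    simp [eq_knockOutConfig_iff hg1C, funext_iff, and_assoc]
  rw [hevent, hfact]
  exact prod_dbnFactor_knockOutConfig hlocal hparents hout a b
end

section
/- There exists a dynamic Bayesian network for which the conditional knock-out model does not satisfy the independence property of upstream components: with N = 3 genes and K = 2 times, let X_{11}, X_{21}, X_{22}, X_{31}, X_{32} be i.i.d. Bernoulli(1/2) and X_{12} = |X_{21} - X_{31}|. Then conditionally on X_{12} = 0 (and X_{11} = 0), the variables X_{21} and X_{31} are not independent; in fact X_{21} = X_{31} almost surely on this event. -/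
open MeasureTheory ProbabilityTheory
open scoped ENNReal ProbabilityTheory

/-!
On the conditioning event `X₁₁ = 0, X₂₁ = X₃₁` the two upstream variables coincide, so if they
were conditionally independent, `X₂₁` would be independent of itself and hence conditionally
almost surely constant. It is not: both configurations `X₂₁ = X₃₁ = 0` and `X₂₁ = X₃₁ = 1` keep
probability `1/8` before conditioning.
-/

namespace ProbabilityTheory

variable {Ω β ι : Type*} {mΩ : MeasurableSpace Ω} {μ : Measure Ω}

lemma IndepFun.measure_preimage_eq_zero_or_one_of_ae_eq [MeasurableSpace β] [IsFiniteMeasure μ]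
    {X X' : Ω → β} (h : X ⟂ᵢ[μ] X') (hXX' : X =ᵐ[μ] X') {s : Set β} (hs : MeasurableSet s) :
    μ (X ⁻¹' s) = 0 ∨ μ (X ⁻¹' s) = 1 :=
  measure_eq_zero_or_one_of_indep_self ((IndepFun_iff_Indep _ _ _).1 (h.congr .rfl hXX'.symm))
    ⟨s, hs, rfl⟩

lemma measure_ne_one_of_disjoint [IsZeroOrProbabilityMeasure μ] {s t : Set Ω}
    (hst : Disjoint s t) (ht : MeasurableSet t) (ht₀ : μ t ≠ 0) : μ s ≠ 1 := by
  intro hs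
  have : μ s + μ t ≤ 1 := measure_union hst ht ▸ prob_le_one
  rw [hs] at this
  exact ht₀ <| le_zero_iff.1 <|
    (ENNReal.add_le_add_iff_left ENNReal.one_ne_top).1 (this.trans_eq (add_zero 1).symm)

lemma iIndepFun.measure_iInter_preimage_singleton_ne_zero [Fintype ι] [MeasurableSpace β]
    [MeasurableSingletonClass β] {Y : ι → Ω → β} (h : iIndepFun Y μ) (v : ι → β)
    (hv : ∀ i, μ (Y i ⁻¹' {v i}) ≠ 0) : μ (⋂ i, Y i ⁻¹' {v i}) ≠ 0 := by
  rw [h.meas_iInter fun i ↦ ⟨{v i}, measurableSet_singleton _, rfl⟩]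
  exact Finset.prod_ne_zero_iff.2 fun i _ ↦ hv i

end ProbabilityTheory

/-- example of a dynamic Bayesian network where the conditional knock-out model
does not satisfy the independence property of upstream components. With `Y 0 = X₁₁`,
`Y 1 = X₂₁`, `Y 2 = X₃₁`, `Y 3 = X₂₂`, `Y 4 = X₃₂` i.i.d. Bernoulli(1/2) and
`X₁₂ = |X₂₁ - X₃₁|`, conditionally on `X₁₁ = 0` and `X₁₂ = 0`, the variables `X₂₁` and `X₃₁`
are not independent; in fact they are almost surely equal on this event. -/
theorem stmt_11 {Ω : Type*} [MeasurableSpace Ω]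
    (Pr : Measure Ω) [IsProbabilityMeasure Pr]
    (Y : Fin 5 → Ω → ℝ) (hY : ∀ i, Measurable (Y i))
    (hind : iIndepFun Y Pr)
    (hlaw0 : ∀ i, Pr {ω | Y i ω = 0} = 1 / 2)
    (hlaw1 : ∀ i, Pr {ω | Y i ω = 1} = 1 / 2) :
    ¬ IndepFun (Y 1) (Y 2) (Pr[|{ω | Y 0 ω = 0 ∧ |Y 1 ω - Y 2 ω| = 0}]) ∧
      (Pr[|{ω | Y 0 ω = 0 ∧ |Y 1 ω - Y 2 ω| = 0}]) {ω | Y 1 ω = Y 2 ω} = 1 := by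
  set A : Set Ω := {ω | Y 0 ω = 0 ∧ |Y 1 ω - Y 2 ω| = 0}
  have hA_eq : A = Y 0 ⁻¹' {0} ∩ {ω | Y 1 ω = Y 2 ω} := by
    ext ω; simp [A, sub_eq_zero]
  have hA : MeasurableSet A :=
    hA_eq ▸ (hY 0 (measurableSet_singleton 0)).inter (measurableSet_eq_fun (hY 1) (hY 2))
  have hdiag : MeasurableSet {ω | Y 1 ω = Y 2 ω} := measurableSet_eq_fun (hY 1) (hY 2)
  have hpos : ∀ b : ℝ, (b = 0 ∨ b = 1) → Pr (A ∩ Y 1 ⁻¹' {b}) ≠ 0 := by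
    intro b hb
    refine ne_bot_of_le_ne_bot
      (hind.measure_iInter_preimage_singleton_ne_zero ![0, b, b, 0, 0] fun i ↦ ?_) ?_
    · rcases hb with rfl | rfl <;> fin_cases i <;> simp [Set.preimage, hlaw0, hlaw1]
    · refine measure_mono fun ω hω ↦ ?_
      simp only [Set.mem_iInter, Set.mem_preimage, Set.mem_singleton_iff] at hω
      simp [A, hω 0, hω 1, hω 2]
  have hcond : ∀ b : ℝ, (b = 0 ∨ b = 1) → Pr[Y 1 ⁻¹' {b} | A] ≠ 0 := fun b hb ↦
    (cond_pos_of_inter_ne_zero hA (hpos b hb)).ne'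
  have := cond_isProbabilityMeasure (μ := Pr)
    (ne_bot_of_le_ne_bot (hpos 0 (.inl rfl)) (measure_mono Set.inter_subset_left))
  have hsame : Pr[{ω | Y 1 ω = Y 2 ω}ᶜ | A] = 0 := by
    rw [cond_apply hA, hA_eq, Set.inter_assoc, Set.inter_compl_self, Set.inter_empty,
      measure_empty, mul_zero]
  refine ⟨fun hindep ↦ ?_, (prob_compl_eq_zero_iff hdiag).1 hsame⟩
  rcases hindep.measure_preimage_eq_zero_or_one_of_ae_eq hsame (measurableSet_singleton 0)
    with h₀ | h₁
  · exact hcond 0 (.inl rfl) h₀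
  · refine measure_ne_one_of_disjoint ?_ (hY 1 (measurableSet_singleton 1)) (hcond 1 (.inr rfl)) h₁
    exact (Set.disjoint_singleton.2 zero_ne_one).preimage (Y 1)
end
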